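/- arXiv:1810.09017 — 2 statements merged into one kernel-verified Lean document; each statement's English description precedes it below -/
import Mathlib

section
/- Let n ≥ 2, −1 < a < 1, and Φ ∈ L¹(S^n). Then ∫_{S^n} Φ(ξ̃) dξ̃ = √(1−a²) ∫_{S^n} (Φ ∘ ν)(ξ) (1 − a²ξ_{n+1}²)^{−(n+1)/2} dξ. -/
open MeasureTheory Metric Filter Real

noncomputable section

/-- The (unnormalized) surface measure on the unit sphere of a finite-dimensional
real inner product space. -/
def sphereVol (E : Type*) [NormedAddCommGroup E] [InnerProductSpace ℝ E]
    [FiniteDimensional ℝ E] [MeasurableSpace E] [BorelSpace E] :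
    Measure (sphere (0 : E) 1) := (volume : Measure E).toSphere

/-- The last basis vector `e_{n+1}` of `ℝ^{n+1}`. -/
def eLast (n : ℕ) : EuclideanSpace ℝ (Fin (n + 1)) := EuclideanSpace.single (Fin.last n) 1

/-- The bijection `ν : S^n → S^n`,
`ν(ξ) = (ξ′ + √(1-a²) ξ_{n+1} e_{n+1}) / √(1 - a²ξ_{n+1}²)`. -/
def nuMap {n : ℕ} (a : ℝ) (ξ : EuclideanSpace ℝ (Fin (n + 1))) :
    EuclideanSpace ℝ (Fin (n + 1)) :=
  (Real.sqrt (1 - a ^ 2 * (ξ (Fin.last n)) ^ 2))⁻¹ •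
    ((ξ - ξ (Fin.last n) • eLast n) + (Real.sqrt (1 - a ^ 2) * ξ (Fin.last n)) • eLast n)

namespace NuProofAux

open Set

abbrev Euc (n : ℕ) := EuclideanSpace ℝ (Fin (n + 1))

def Tlin (n : ℕ) (c : ℝ) : Euc n →ₗ[ℝ] Euc n :=
  ((WithLp.linearEquiv 2 ℝ (Fin (n + 1) → ℝ)).symm.toLinearMap.comp
    (Matrix.toLin' (Matrix.diagonal fun i => if i = Fin.last n then c else 1))).comp
    (WithLp.linearEquiv 2 ℝ (Fin (n + 1) → ℝ)).toLinearMap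

lemma Tlin_apply {n : ℕ} (c : ℝ) (x : Euc n) (i : Fin (n + 1)) :
    Tlin n c x i = (if i = Fin.last n then c else 1) * x i := by
  simp [Tlin, Matrix.toLin'_apply, Matrix.mulVec_diagonal]

lemma det_Tlin (n : ℕ) (c : ℝ) : LinearMap.det (Tlin n c) = c := by
  have h := LinearMap.det_conj
    (Matrix.toLin' (Matrix.diagonal fun i : Fin (n + 1) => if i = Fin.last n then c else 1))
    (WithLp.linearEquiv 2 ℝ (Fin (n + 1) → ℝ)).symm
  rw [LinearEquiv.symm_symm] at h
  rw [Tlin, LinearMap.comp_assoc, h, LinearMap.det_toLin', Matrix.det_diagonal]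
  simp [Finset.prod_ite_eq']

lemma norm_sq_eq {n : ℕ} (x : Euc n) : ‖x‖ ^ 2 = ∑ i, x i ^ 2 := by
  rw [EuclideanSpace.norm_eq, Real.sq_sqrt (Finset.sum_nonneg fun i _ => sq_nonneg _)]
  simp [Real.norm_eq_abs, sq_abs]

lemma Tlin_eq {n : ℕ} (c : ℝ) (x : Euc n) :
    Tlin n c x = (x - x (Fin.last n) • eLast n) + (c * x (Fin.last n)) • eLast n := by
  ext i
  have h1 : ((x - x (Fin.last n) • eLast n) + (c * x (Fin.last n)) • eLast n) i
      = x i - x (Fin.last n) * (eLast n i) + c * x (Fin.last n) * (eLast n i) := by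
    simp [PiLp.add_apply, PiLp.sub_apply, PiLp.smul_apply, smul_eq_mul]
  rw [Tlin_apply, h1]
  by_cases hi : i = Fin.last n
  · subst hi; simp [eLast, EuclideanSpace.single_apply]
  · simp [eLast, EuclideanSpace.single_apply, hi]

lemma norm_Tlin_sq {n : ℕ} (c : ℝ) (x : Euc n) :
    ‖Tlin n c x‖ ^ 2 = ‖x‖ ^ 2 + (c ^ 2 - 1) * (x (Fin.last n)) ^ 2 := by
  rw [norm_sq_eq, norm_sq_eq]
  simp only [Tlin_apply]
  have : ∀ i : Fin (n + 1), ((if i = Fin.last n then c else 1) * x i) ^ 2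
      = x i ^ 2 + (if i = Fin.last n then (c ^ 2 - 1) * x i ^ 2 else 0) := by
    intro i; split <;> ring
  rw [Finset.sum_congr rfl fun i _ => this i, Finset.sum_add_distrib,
    Finset.sum_ite_eq' Finset.univ (Fin.last n) fun i => (c ^ 2 - 1) * x i ^ 2]
  simp

lemma polar_integral_eq {E : Type*} [NormedAddCommGroup E] [NormedSpace ℝ E]
    [MeasurableSpace E] [BorelSpace E] [FiniteDimensional ℝ E] [Nontrivial E]
    (μ : Measure E) [μ.IsAddHaarMeasure] (G : E → ℝ) :
    ∫ x, G x ∂μ = ∫ p : sphere (0 : E) 1 × Ioi (0 : ℝ), G (p.2.1 • p.1.1)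
      ∂(μ.toSphere.prod (Measure.volumeIoiPow (Module.finrank ℝ E - 1))) := by
  have h1 : ∫ x, G x ∂μ = ∫ x : ({0}ᶜ : Set E), G x ∂(μ.comap Subtype.val) := by
    rw [integral_subtype_comap (measurableSet_singleton 0).compl,
      MeasureTheory.restrict_compl_singleton]
  rw [h1, ← μ.measurePreserving_homeomorphUnitSphereProd.integral_comp
      (Homeomorph.measurableEmbedding _) (fun p => G (p.2.1 • p.1.1))]
  congr 1
  funext x
  simp only [homeomorphUnitSphereProd_apply_snd_coe, homeomorphUnitSphereProd_apply_fst_coe]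
  rw [smul_inv_smul₀ (norm_ne_zero_iff.2 x.2)]

lemma polar_integrable_iff {E : Type*} [NormedAddCommGroup E] [NormedSpace ℝ E]
    [MeasurableSpace E] [BorelSpace E] [FiniteDimensional ℝ E] [Nontrivial E]
    (μ : Measure E) [μ.IsAddHaarMeasure] (G : E → ℝ) :
    Integrable (fun p : sphere (0 : E) 1 × Ioi (0 : ℝ) => G (p.2.1 • p.1.1))
      (μ.toSphere.prod (Measure.volumeIoiPow (Module.finrank ℝ E - 1))) ↔ Integrable G μ := by
  rw [← μ.measurePreserving_homeomorphUnitSphereProd.integrable_comp_emb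
      (Homeomorph.measurableEmbedding _)]
  have h2 : ((fun p : sphere (0 : E) 1 × Ioi (0 : ℝ) => G (p.2.1 • p.1.1)) ∘
      (homeomorphUnitSphereProd E)) = fun x : ({0}ᶜ : Set E) => G x := by
    funext x
    simp only [Function.comp_apply, homeomorphUnitSphereProd_apply_snd_coe,
      homeomorphUnitSphereProd_apply_fst_coe]
    rw [smul_inv_smul₀ (norm_ne_zero_iff.2 x.2)]
  rw [h2]
  have h3 : Integrable G μ ↔ Integrable (fun x : ({0}ᶜ : Set E) => G x) (μ.comap Subtype.val) := by
    conv_lhs => rw [← MeasureTheory.restrict_compl_singleton (μ := μ) (0 : E),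
      ← map_comap_subtype_coe (measurableSet_singleton (0:E)).compl]
    rw [(MeasurableEmbedding.subtype_coe (measurableSet_singleton (0:E)).compl).integrable_map_iff]
    exact Iff.rfl
  exact h3.symm

lemma integrable_volumeIoiPow_exp (n : ℕ) {m : ℝ} (hm : 0 < m) :
    Integrable (fun r : Ioi (0 : ℝ) => Real.exp (-(m * r)))
      (Measure.volumeIoiPow n) := by
  rw [Measure.volumeIoiPow]
  refine (integrable_withDensity_iff ((measurable_subtype_coe.pow_const n).ennreal_ofReal)
    (Filter.Eventually.of_forall fun x => ENNReal.ofReal_lt_top)).mpr ?_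
  have h3 : Integrable ((fun x : ℝ => Real.exp (-(m * x)) * (ENNReal.ofReal (x ^ n)).toReal) ∘
      (Subtype.val : Ioi (0:ℝ) → ℝ)) (Measure.comap Subtype.val volume) := by
    rw [← (MeasurableEmbedding.subtype_coe measurableSet_Ioi).integrable_map_iff,
      map_comap_subtype_coe measurableSet_Ioi]
    have base : IntegrableOn (fun x : ℝ => x ^ (n : ℝ) * Real.exp (-m * x ^ (1:ℝ)))
        (Ioi 0) volume := integrableOn_rpow_mul_exp_neg_mul_rpow
          (by exact_mod_cast neg_one_lt_zero.trans_le (Nat.cast_nonneg n)) one_pos hm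
    refine (base.congr_fun (fun x hx => ?_) measurableSet_Ioi)
    have hx0 : (0:ℝ) < x := hx
    beta_reduce
    rw [Real.rpow_one, Real.rpow_natCast, ENNReal.toReal_ofReal (by positivity)]
    ring_nf
  exact h3

lemma integral_volumeIoiPow_exp (n : ℕ) {m : ℝ} (hm : 0 < m) :
    ∫ r : Ioi (0 : ℝ), Real.exp (-(m * r)) ∂(Measure.volumeIoiPow n)
      = (1 / m) ^ ((n : ℝ) + 1) * Real.Gamma ((n : ℝ) + 1) := by
  rw [Measure.volumeIoiPow]
  simp only [ENNReal.ofReal]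
  rw [integral_withDensity_eq_integral_smul ((measurable_subtype_coe.pow_const n).real_toNNReal),
    integral_subtype_comap measurableSet_Ioi (fun a : ℝ => (a ^ n).toNNReal • Real.exp (-(m * a)))]
  rw [setIntegral_congr_fun measurableSet_Ioi (g := fun x : ℝ =>
    x ^ (((n : ℝ) + 1) - 1) * Real.exp (-(m * x))) (fun x hx => ?_)]
  · exact Real.integral_rpow_mul_exp_neg_mul_Ioi (by positivity) hm
  · have hx0 : (0:ℝ) < x := hx
    rw [NNReal.smul_def, Real.coe_toNNReal _ (by positivity), smul_eq_mul]
    have hcast : ((n : ℝ) + 1) - 1 = (n : ℝ) := by ring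
    rw [hcast]
    simp [Real.rpow_natCast, mul_comm]

end NuProofAux

open NuProofAux Set

/-- For `n ≥ 2`, `-1 < a < 1`, and `Φ ∈ L¹(S^n)`,
`∫_{S^n} Φ(ξ̃) dξ̃ = √(1-a²) ∫_{S^n} (Φ ∘ ν)(ξ) (1 - a²ξ_{n+1}²)^{-(n+1)/2} dξ`. -/
theorem integral_nu_change_of_variable (n : ℕ) (hn : 2 ≤ n) (a : ℝ) (ha : -1 < a) (ha' : a < 1)
    (Φ : EuclideanSpace ℝ (Fin (n + 1)) → ℝ)
    (hΦ : Integrable (fun ξ : sphere (0 : EuclideanSpace ℝ (Fin (n + 1))) 1 => Φ ξ)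
      (sphereVol (EuclideanSpace ℝ (Fin (n + 1))))) :
    ∫ ξ : sphere (0 : EuclideanSpace ℝ (Fin (n + 1))) 1, Φ ξ
        ∂(sphereVol (EuclideanSpace ℝ (Fin (n + 1)))) =
      Real.sqrt (1 - a ^ 2) *
        ∫ ξ : sphere (0 : EuclideanSpace ℝ (Fin (n + 1))) 1,
          Φ (nuMap a ξ) /
            (1 - a ^ 2 * ((ξ : EuclideanSpace ℝ (Fin (n + 1))) (Fin.last n)) ^ 2) ^
              (((n : ℝ) + 1) / 2)
        ∂(sphereVol (EuclideanSpace ℝ (Fin (n + 1)))) := by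
  classical
  have ha2 : a ^ 2 < 1 := by nlinarith
  set c : ℝ := Real.sqrt (1 - a ^ 2) with hc_def
  have hc_pos : 0 < c := Real.sqrt_pos.mpr (by linarith)
  have hc_sq : c ^ 2 = 1 - a ^ 2 := Real.sq_sqrt (by linarith)
  set μ : Measure (Euc n) := (volume : Measure (Euc n)) with hμ_def
  have hsv : sphereVol (EuclideanSpace ℝ (Fin (n + 1))) = μ.toSphere := rfl
  rw [hsv] at hΦ ⊢
  set σ : Measure (sphere (0 : Euc n) 1) := μ.toSphere with hσ_def
  -- dimension
  have hfr : Module.finrank ℝ (Euc n) - 1 = n := by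
    rw [finrank_euclideanSpace_fin]
    omega
  haveI : Nontrivial (Euc n) := inferInstance
  -- specialized polar formulas
  have polar_eq : ∀ G : Euc n → ℝ, ∫ x, G x ∂μ
      = ∫ p : sphere (0 : Euc n) 1 × Ioi (0 : ℝ), G (p.2.1 • p.1.1)
        ∂(σ.prod (Measure.volumeIoiPow n)) := by
    intro G
    have h := polar_integral_eq μ G
    rwa [hfr] at h
  have polar_int : ∀ G : Euc n → ℝ,
      Integrable (fun p : sphere (0 : Euc n) 1 × Ioi (0 : ℝ) => G (p.2.1 • p.1.1))
        (σ.prod (Measure.volumeIoiPow n)) ↔ Integrable G μ := by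
    intro G
    have h := polar_integrable_iff μ G
    rwa [hfr] at h
  -- coordinate bound
  have hq_pos : ∀ ξ : sphere (0 : Euc n) 1,
      0 < 1 - a ^ 2 * ((ξ : Euc n) (Fin.last n)) ^ 2 := by
    intro ξ
    have hnorm : ‖(ξ : Euc n)‖ = 1 := mem_sphere_zero_iff_norm.mp ξ.2
    have h1 : ((ξ : Euc n) (Fin.last n)) ^ 2 ≤ ∑ i, ((ξ : Euc n) i) ^ 2 :=
      Finset.single_le_sum (f := fun i => ((ξ : Euc n) i) ^ 2)
        (fun i _ => sq_nonneg _) (Finset.mem_univ (Fin.last n))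
    have h2 := norm_sq_eq (ξ : Euc n)
    rw [hnorm] at h2
    have h3 : ((ξ : Euc n) (Fin.last n)) ^ 2 ≤ 1 := by rw [← h2] at h1; simpa using h1
    nlinarith [sq_nonneg a, sq_nonneg ((ξ : Euc n) (Fin.last n))]
  set T : Euc n →ₗ[ℝ] Euc n := Tlin n c with hT_def
  have hTnorm : ∀ ξ : sphere (0 : Euc n) 1,
      ‖T (ξ : Euc n)‖ = Real.sqrt (1 - a ^ 2 * ((ξ : Euc n) (Fin.last n)) ^ 2) := by
    intro ξ
    have hnorm : ‖(ξ : Euc n)‖ = 1 := mem_sphere_zero_iff_norm.mp ξ.2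
    have h2 : ‖T (ξ : Euc n)‖ ^ 2 = 1 - a ^ 2 * ((ξ : Euc n) (Fin.last n)) ^ 2 := by
      rw [hT_def, norm_Tlin_sq, hnorm, hc_sq]; ring
    rw [← Real.sqrt_sq (norm_nonneg (T (ξ : Euc n))), h2]
  -- the auxiliary function
  set F : Euc n → ℝ := fun x => Φ (‖x‖⁻¹ • x) * Real.exp (-‖x‖) with hF_def
  have hFprod_eq : (fun p : sphere (0 : Euc n) 1 × Ioi (0 : ℝ) => F (p.2.1 • p.1.1))
      = fun p => Φ p.1.1 * Real.exp (-(1 * p.2.1)) := by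
    funext p
    have hp : (0 : ℝ) < p.2.1 := p.2.2
    have hξ : ‖(p.1.1 : Euc n)‖ = 1 := mem_sphere_zero_iff_norm.mp p.1.2
    simp only [hF_def]
    rw [norm_smul, Real.norm_eq_abs, abs_of_pos hp, hξ, mul_one, inv_smul_smul₀ hp.ne',
      one_mul]
  have hΦσ : Integrable (fun ξ : sphere (0 : Euc n) 1 => Φ ξ.1) σ := hΦ
  have hexp_int : Integrable (fun r : Ioi (0:ℝ) => Real.exp (-(1 * r)))
      (Measure.volumeIoiPow n) := integrable_volumeIoiPow_exp n one_pos
  have hprod1_int : Integrable (fun p : sphere (0 : Euc n) 1 × Ioi (0 : ℝ) =>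
      Φ p.1.1 * Real.exp (-(1 * p.2.1))) (σ.prod (Measure.volumeIoiPow n)) :=
    hΦσ.mul_prod hexp_int
  have hF_int : Integrable F μ := by
    refine (polar_int F).mp ?_
    rw [hFprod_eq]; exact hprod1_int
  have hΓ_pos : 0 < Real.Gamma ((n : ℝ) + 1) := Real.Gamma_pos_of_pos (by positivity)
  have hLHS : ∫ x, F x ∂μ = (∫ ξ, Φ ξ.1 ∂σ) * Real.Gamma ((n : ℝ) + 1) := by
    rw [polar_eq F, hFprod_eq,
      integral_prod_mul (f := fun ξ : sphere (0 : Euc n) 1 => Φ ξ.1)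
        (g := fun r : Ioi (0:ℝ) => Real.exp (-(1 * r.1))),
      integral_volumeIoiPow_exp n one_pos]
    norm_num
  -- change of variables by T
  have hdet : LinearMap.det T = c := det_Tlin n c
  have hdet0 : LinearMap.det T ≠ 0 := by rw [hdet]; exact hc_pos.ne'
  have hTemb : MeasurableEmbedding (⇑T) :=
    (LinearMap.equivOfDetNeZero T hdet0).toContinuousLinearEquiv.toHomeomorph.measurableEmbedding
  have hmap : Measure.map (⇑T) μ = ENNReal.ofReal |c⁻¹| • μ := by
    have h := Measure.map_linearMap_addHaar_eq_smul_addHaar μ hdet0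
    rwa [hdet] at h
  have hFT_int : Integrable (fun y => F (T y)) μ := by
    have h1 : Integrable F (Measure.map (⇑T) μ) := by
      rw [hmap]; exact hF_int.smul_measure ENNReal.ofReal_ne_top
    exact hTemb.integrable_map_iff.mp h1
  have hchange : ∫ x, F x ∂μ = c * ∫ y, F (T y) ∂μ := by
    have h1 : ∫ y, F (T y) ∂μ = ∫ x, F x ∂(Measure.map (⇑T) μ) := (hTemb.integral_map F).symm
    rw [h1, hmap, integral_smul_measure, ENNReal.toReal_ofReal (abs_nonneg _),
      abs_of_pos (inv_pos.mpr hc_pos), smul_eq_mul]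
    field_simp
  -- key pointwise computation
  have hkey : (fun p : sphere (0 : Euc n) 1 × Ioi (0 : ℝ) => F (T (p.2.1 • p.1.1)))
      = fun p => Φ (nuMap a p.1.1) * Real.exp
          (-(Real.sqrt (1 - a ^ 2 * ((p.1.1 : Euc n) (Fin.last n)) ^ 2) * p.2.1)) := by
    funext p
    obtain ⟨ξ, r⟩ := p
    have hr : (0 : ℝ) < r.1 := r.2
    have hs_pos : (0 : ℝ) < Real.sqrt (1 - a ^ 2 * ((ξ : Euc n) (Fin.last n)) ^ 2) :=
      Real.sqrt_pos.mpr (hq_pos ξ)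
    have hTs : T (r.1 • (ξ : Euc n)) = r.1 • T (ξ : Euc n) := map_smul T r.1 (ξ : Euc n)
    simp only [hF_def, hTs]
    rw [norm_smul, Real.norm_eq_abs, abs_of_pos hr, hTnorm ξ]
    have harg : (r.1 * Real.sqrt (1 - a ^ 2 * ((ξ : Euc n) (Fin.last n)) ^ 2))⁻¹ •
        (r.1 • T (ξ : Euc n))
        = (Real.sqrt (1 - a ^ 2 * ((ξ : Euc n) (Fin.last n)) ^ 2))⁻¹ • T (ξ : Euc n) := by
      rw [smul_smul]
      congr 1
      field_simp
    rw [harg]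
    have hnu : (Real.sqrt (1 - a ^ 2 * ((ξ : Euc n) (Fin.last n)) ^ 2))⁻¹ • T (ξ : Euc n)
        = nuMap a (ξ : Euc n) := by
      rw [hT_def, Tlin_eq, nuMap]
    rw [hnu, mul_comm r.1 (Real.sqrt (1 - a ^ 2 * ((ξ : Euc n) (Fin.last n)) ^ 2))]
  have hG2_int : Integrable (fun p : sphere (0 : Euc n) 1 × Ioi (0 : ℝ) =>
      Φ (nuMap a p.1.1) * Real.exp
        (-(Real.sqrt (1 - a ^ 2 * ((p.1.1 : Euc n) (Fin.last n)) ^ 2) * p.2.1)))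
      (σ.prod (Measure.volumeIoiPow n)) := by
    have h := (polar_int (fun y => F (T y))).mpr hFT_int
    beta_reduce at h
    rwa [hkey] at h
  have hRHS : ∫ y, F (T y) ∂μ = Real.Gamma ((n : ℝ) + 1) *
      ∫ ξ : sphere (0 : Euc n) 1, Φ (nuMap a ξ.1) /
        (1 - a ^ 2 * ((ξ : Euc n) (Fin.last n)) ^ 2) ^ (((n : ℝ) + 1) / 2) ∂σ := by
    have h0 : ∫ y, F (T y) ∂μ = ∫ p : sphere (0 : Euc n) 1 × Ioi (0 : ℝ),
        Φ (nuMap a p.1.1) * Real.exp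
          (-(Real.sqrt (1 - a ^ 2 * ((p.1.1 : Euc n) (Fin.last n)) ^ 2) * p.2.1))
        ∂(σ.prod (Measure.volumeIoiPow n)) := by
      have h := polar_eq (fun y => F (T y))
      beta_reduce at h
      rwa [hkey] at h
    rw [h0, integral_prod _ hG2_int]
    show (∫ ξ : sphere (0 : Euc n) 1, ∫ r : Ioi (0 : ℝ), Φ (nuMap a ξ.1) * Real.exp
          (-(Real.sqrt (1 - a ^ 2 * ((ξ : Euc n) (Fin.last n)) ^ 2) * r.1))
          ∂(Measure.volumeIoiPow n) ∂σ) = _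
    have hinner : ∀ ξ : sphere (0 : Euc n) 1,
        (∫ r : Ioi (0 : ℝ), Φ (nuMap a ξ.1) * Real.exp
          (-(Real.sqrt (1 - a ^ 2 * ((ξ : Euc n) (Fin.last n)) ^ 2) * r.1))
          ∂(Measure.volumeIoiPow n))
        = Real.Gamma ((n : ℝ) + 1) * (Φ (nuMap a ξ.1) /
            (1 - a ^ 2 * ((ξ : Euc n) (Fin.last n)) ^ 2) ^ (((n : ℝ) + 1) / 2)) := by
      intro ξ
      have hq := hq_pos ξ
      have hs_pos : (0 : ℝ) < Real.sqrt (1 - a ^ 2 * ((ξ : Euc n) (Fin.last n)) ^ 2) :=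
        Real.sqrt_pos.mpr hq
      rw [integral_const_mul, integral_volumeIoiPow_exp n hs_pos]
      set q : ℝ := 1 - a ^ 2 * ((ξ : Euc n) (Fin.last n)) ^ 2 with hq_def
      have hpow : (1 / Real.sqrt q) ^ ((n : ℝ) + 1) = (q ^ (((n : ℝ) + 1) / 2))⁻¹ := by
        rw [Real.sqrt_eq_rpow, one_div, ← Real.rpow_neg hq.le, ← Real.rpow_mul hq.le,
          show (-(1 / 2 : ℝ)) * ((n : ℝ) + 1) = -(((n : ℝ) + 1) / 2) by ring,
          Real.rpow_neg hq.le]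
      rw [hpow, div_eq_mul_inv]
      ring
    rw [show (fun ξ : sphere (0 : Euc n) 1 => ∫ r : Ioi (0 : ℝ), Φ (nuMap a ξ.1) * Real.exp
          (-(Real.sqrt (1 - a ^ 2 * ((ξ : Euc n) (Fin.last n)) ^ 2) * r.1))
          ∂(Measure.volumeIoiPow n))
        = fun ξ : sphere (0 : Euc n) 1 => Real.Gamma ((n : ℝ) + 1) * (Φ (nuMap a ξ.1) /
            (1 - a ^ 2 * ((ξ : Euc n) (Fin.last n)) ^ 2) ^ (((n : ℝ) + 1) / 2))
      from funext hinner]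
    rw [integral_const_mul]
  -- combine
  have hmain : (∫ ξ, Φ ξ.1 ∂σ) * Real.Gamma ((n : ℝ) + 1)
      = (c * ∫ ξ : sphere (0 : Euc n) 1, Φ (nuMap a ξ.1) /
        (1 - a ^ 2 * ((ξ : Euc n) (Fin.last n)) ^ 2) ^ (((n : ℝ) + 1) / 2) ∂σ)
        * Real.Gamma ((n : ℝ) + 1) := by
    rw [← hLHS, hchange, hRHS]; ring
  exact mul_right_cancel₀ hΓ_pos.ne' hmain

end
end

section
/- Let 0 < α₀ < 1 and let u : (0,α₀] × (0,∞) → ℝ be measurable. Assume: (a) u(α,t) → u₀ as (α,t) → (0,0) with α ∈ (0,α₀], t > 0; (b) there exists c > 0 such that ∫₀^∞ |u(α,t)| dt ≤ c for all α ∈ (0,α₀]. Then lim_{α→0⁺} (1/Γ(α)) ∫₀^∞ t^{α−1} u(α,t) dt = u₀. -/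
/-!
Fix `δ` so that `|u(α,t) - u₀| ≤ ε` for `t ≤ δ` and all small `α`, and split the integral at `δ`.
Since `∫₀^δ t^(α-1) dt = δ^α / α` and `α Γ(α) = Γ(α+1) → 1`, the part over `(0, δ]` is within
`ε δ^α / Γ(α+1)` of `u₀ δ^α / Γ(α+1) → u₀`. On `(δ, ∞)` the kernel is at most `δ^(α-1)`, so the
tail is bounded by `δ^(α-1) c`, and `1 / Γ(α) = α / Γ(α+1) → 0` kills it.
-/

open MeasureTheory Filter Real Set Topology

noncomputable def rieszIntegral (α : ℝ) (f : ℝ → ℝ) : ℝ :=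
  1 / Gamma α * ∫ t in Ioi 0, t ^ (α - 1) * f t

lemma Measurable.domRestrict_of_uncurry {α β γ : Type*} [MeasurableSpace α] [MeasurableSpace β]
    [MeasurableSpace γ] {s : Set α} {t : Set β} {f : α → β → γ}
    (hf : Measurable ((s ×ˢ t).domRestrict (Function.uncurry f))) {a : α} (ha : a ∈ s) :
    Measurable (t.domRestrict (f a)) :=
  hf.comp ((measurable_prodMk_left.comp measurable_subtype_coe).subtype_mk
    (h := fun x => mk_mem_prod ha x.2))

section AbsIntegral

variable {X : Type*} [MeasurableSpace X] {μ : Measure X} {f : X → ℝ} {c : ℝ}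

lemma integrable_of_lintegral_ofReal_abs_le (hf : AEStronglyMeasurable f μ)
    (h : ∫⁻ x, ENNReal.ofReal |f x| ∂μ ≤ ENNReal.ofReal c) : Integrable f μ :=
  ⟨hf, by simpa only [HasFiniteIntegral, Real.enorm_eq_ofReal_abs] using
    h.trans_lt ENNReal.ofReal_lt_top⟩

lemma integral_abs_le_of_lintegral_ofReal_abs_le (hf : AEStronglyMeasurable f μ)
    (h : ∫⁻ x, ENNReal.ofReal |f x| ∂μ ≤ ENNReal.ofReal c) : ∫ x, |f x| ∂μ ≤ max c 0 := by
  calc ∫ x, |f x| ∂μ = (∫⁻ x, ‖f x‖ₑ ∂μ).toReal := integral_norm_eq_lintegral_enorm hf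
    _ ≤ (ENNReal.ofReal c).toReal := by
      simpa only [Real.enorm_eq_ofReal_abs] using ENNReal.toReal_mono ENNReal.ofReal_ne_top h
    _ = max c 0 := ENNReal.toReal_ofReal'

end AbsIntegral

section RieszKernel

variable {f : ℝ → ℝ} {α δ : ℝ}

lemma integral_Ioc_rpow_sub_one (hα : 0 < α) (hδ : 0 ≤ δ) :
    ∫ t in Ioc 0 δ, t ^ (α - 1) = δ ^ α / α := by
  rw [← intervalIntegral.integral_of_le hδ, integral_rpow (Or.inl (by linarith)),
    sub_add_cancel, zero_rpow hα.ne', sub_zero]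

lemma integrableOn_rpow_sub_one_mul_Ioc (hα : 0 < α) {M : ℝ}
    (hf : AEStronglyMeasurable f (volume.restrict (Ioc 0 δ)))
    (hM : ∀ t ∈ Ioc 0 δ, |f t| ≤ M) :
    IntegrableOn (fun t => t ^ (α - 1) * f t) (Ioc 0 δ) :=
  (intervalIntegral.intervalIntegrable_rpow' (a := 0) (b := δ) (by linarith)).1.mul_bdd hf
    ((ae_restrict_iff' measurableSet_Ioc).2 (Eventually.of_forall hM))

lemma integrableOn_rpow_sub_one_mul_Ioi (hα : α ≤ 1) (hδ : 0 < δ) (hf : IntegrableOn f (Ioi δ)) :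
    IntegrableOn (fun t => t ^ (α - 1) * f t) (Ioi δ) := by
  refine hf.bdd_mul (c := δ ^ (α - 1)) ?_ ?_
  · exact (measurable_id.pow_const _).aestronglyMeasurable
  · filter_upwards [ae_restrict_mem measurableSet_Ioi] with t ht
    rw [Real.norm_of_nonneg (rpow_nonneg (hδ.trans ht).le _)]
    exact rpow_le_rpow_of_nonpos hδ ht.le (by linarith)

lemma abs_integral_Ioc_rpow_sub_one_mul_sub_le (hα : 0 < α) (hδ : 0 ≤ δ) {a ε : ℝ}
    (hfi : IntegrableOn (fun t => t ^ (α - 1) * f t) (Ioc 0 δ))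
    (hnear : ∀ t ∈ Ioc 0 δ, |f t - a| ≤ ε) :
    |(∫ t in Ioc 0 δ, t ^ (α - 1) * f t) - a * (δ ^ α / α)| ≤ ε * (δ ^ α / α) := by
  have hk : IntegrableOn (fun t : ℝ => t ^ (α - 1)) (Ioc 0 δ) :=
    (intervalIntegral.intervalIntegrable_rpow' (by linarith)).1
  have hsub : ∫ t in Ioc 0 δ, t ^ (α - 1) * (f t - a) =
      (∫ t in Ioc 0 δ, t ^ (α - 1) * f t) - a * (δ ^ α / α) := by
    simp_rw [mul_sub]
    rw [integral_sub hfi (hk.mul_const a), integral_mul_const, integral_Ioc_rpow_sub_one hα hδ,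
      mul_comm]
  calc |(∫ t in Ioc 0 δ, t ^ (α - 1) * f t) - a * (δ ^ α / α)|
      = ‖∫ t in Ioc 0 δ, t ^ (α - 1) * (f t - a)‖ := by rw [hsub, Real.norm_eq_abs]
    _ ≤ ∫ t in Ioc 0 δ, t ^ (α - 1) * ε := by
      refine norm_integral_le_of_norm_le (hk.mul_const ε) ?_
      filter_upwards [ae_restrict_mem measurableSet_Ioc] with t ht
      rw [norm_mul, Real.norm_of_nonneg (rpow_nonneg ht.1.le _)]
      exact mul_le_mul_of_nonneg_left (hnear t ht) (rpow_nonneg ht.1.le _)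
    _ = ε * (δ ^ α / α) := by rw [integral_mul_const, integral_Ioc_rpow_sub_one hα hδ, mul_comm]

lemma abs_integral_Ioi_rpow_sub_one_mul_le (hα : α ≤ 1) (hδ : 0 < δ) (hf : IntegrableOn f (Ioi δ)) :
    |∫ t in Ioi δ, t ^ (α - 1) * f t| ≤ δ ^ (α - 1) * ∫ t in Ioi δ, |f t| := by
  calc |∫ t in Ioi δ, t ^ (α - 1) * f t| = ‖∫ t in Ioi δ, t ^ (α - 1) * f t‖ := rfl
    _ ≤ ∫ t in Ioi δ, δ ^ (α - 1) * |f t| := by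
      refine norm_integral_le_of_norm_le (hf.abs.const_mul _) ?_
      filter_upwards [ae_restrict_mem measurableSet_Ioi] with t ht
      rw [norm_mul, Real.norm_of_nonneg (rpow_nonneg (hδ.trans ht).le _), Real.norm_eq_abs]
      exact mul_le_mul_of_nonneg_right (rpow_le_rpow_of_nonpos hδ ht.le (by linarith))
        (abs_nonneg _)
    _ = δ ^ (α - 1) * ∫ t in Ioi δ, |f t| := integral_const_mul _ _

lemma abs_rieszIntegral_sub_le {a ε C : ℝ} (hα : 0 < α) (hα1 : α ≤ 1) (hδ : 0 < δ)
    (hf : IntegrableOn f (Ioi 0)) (hfC : ∫ t in Ioi 0, |f t| ≤ C)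
    (hnear : ∀ t ∈ Ioc 0 δ, |f t - a| ≤ ε) :
    |rieszIntegral α f - a| ≤ ε * (δ ^ α / Gamma (α + 1)) + |a| * |δ ^ α / Gamma (α + 1) - 1|
      + C * δ ^ (α - 1) * (α / Gamma (α + 1)) := by
  have hΓ : 0 < Gamma α := Gamma_pos_of_pos hα
  set k := α / Gamma (α + 1) with hk_def
  have hk : 0 ≤ k := div_nonneg hα.le (Gamma_pos_of_pos (by linarith)).le
  have hΓk : 1 / Gamma α = k := by rw [hk_def, Gamma_add_one hα.ne']; field_simp
  have hkδ : k * (δ ^ α / α) = δ ^ α / Gamma (α + 1) := by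
    rw [hk_def, Gamma_add_one hα.ne']; field_simp
  have hIoc : IntegrableOn (fun t => t ^ (α - 1) * f t) (Ioc 0 δ) :=
    integrableOn_rpow_sub_one_mul_Ioc hα (hf.mono_set Ioc_subset_Ioi_self).aestronglyMeasurable
      (M := |a| + ε) fun t ht => by linarith [hnear t ht, abs_sub_abs_le_abs_sub (f t) a]
  have hIoi : IntegrableOn (fun t => t ^ (α - 1) * f t) (Ioi δ) :=
    integrableOn_rpow_sub_one_mul_Ioi hα1 hδ (hf.mono_set (Ioi_subset_Ioi hδ.le))
  set A := ∫ t in Ioc 0 δ, t ^ (α - 1) * f t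
  set B := ∫ t in Ioi δ, t ^ (α - 1) * f t
  have hsplit : ∫ t in Ioi 0, t ^ (α - 1) * f t = A + B := by
    rw [← Ioc_union_Ioi_eq_Ioi hδ.le,
      setIntegral_union (Ioc_disjoint_Ioi le_rfl) measurableSet_Ioi hIoc hIoi]
  have hA : |A - a * (δ ^ α / α)| ≤ ε * (δ ^ α / α) :=
    abs_integral_Ioc_rpow_sub_one_mul_sub_le hα hδ.le hIoc hnear
  have hB : |B| ≤ δ ^ (α - 1) * C := by
    have htail : ∫ t in Ioi δ, |f t| ≤ C :=
      (setIntegral_mono_set hf.abs (Eventually.of_forall fun t => abs_nonneg (f t))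
        (Ioi_subset_Ioi hδ.le).eventuallyLE).trans hfC
    exact (abs_integral_Ioi_rpow_sub_one_mul_le hα1 hδ (hf.mono_set (Ioi_subset_Ioi hδ.le))).trans
      (mul_le_mul_of_nonneg_left htail (rpow_nonneg hδ.le _))
  calc |rieszIntegral α f - a|
      = |k * (A - a * (δ ^ α / α)) + a * (δ ^ α / Gamma (α + 1) - 1) + k * B| := by
        rw [rieszIntegral, hΓk, hsplit, ← hkδ]; ring_nf
    _ ≤ |k * (A - a * (δ ^ α / α))| + |a * (δ ^ α / Gamma (α + 1) - 1)| + |k * B| :=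
        abs_add_three _ _ _
    _ ≤ k * (ε * (δ ^ α / α)) + |a| * |δ ^ α / Gamma (α + 1) - 1| + k * (δ ^ (α - 1) * C) := by
        rw [abs_mul, abs_mul, abs_mul, abs_of_nonneg hk]; gcongr
    _ = ε * (δ ^ α / Gamma (α + 1)) + |a| * |δ ^ α / Gamma (α + 1) - 1|
          + C * δ ^ (α - 1) * (α / Gamma (α + 1)) := by rw [← hkδ]; ring

end RieszKernel

lemma tendsto_rieszIntegral_error_bound {δ : ℝ} (hδ : 0 < δ) (a ε C : ℝ) :
    Tendsto (fun α : ℝ => ε * (δ ^ α / Gamma (α + 1)) + |a| * |δ ^ α / Gamma (α + 1) - 1|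
      + C * δ ^ (α - 1) * (α / Gamma (α + 1))) (𝓝 0) (𝓝 ε) := by
  have hΓ : ContinuousAt (fun α : ℝ => Gamma (α + 1)) 0 :=
    (differentiableAt_Gamma fun m => by linarith [m.cast_nonneg (α := ℝ)]).continuousAt.comp
      (by fun_prop)
  have hcont : ContinuousAt (fun α : ℝ => ε * (δ ^ α / Gamma (α + 1))
      + |a| * |δ ^ α / Gamma (α + 1) - 1| + C * δ ^ (α - 1) * (α / Gamma (α + 1))) 0 := by
    fun_prop (disch := simp [hδ.ne'])
  simpa using hcont.tendsto

theorem riesz_limit_parametric_general (α₀ : ℝ) (hα₀ : 0 < α₀)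
    (u : ℝ → ℝ → ℝ) (u₀ : ℝ)
    (hmeas : Measurable ((Set.Ioc (0 : ℝ) α₀ ×ˢ Set.Ioi (0 : ℝ)).restrict
      (Function.uncurry u)))
    (hlim : ∀ ε > (0 : ℝ), ∃ δ > (0 : ℝ), ∀ α ∈ Set.Ioc (0 : ℝ) α₀, ∀ t > (0 : ℝ),
      α + t < δ → |u α t - u₀| < ε)
    (c : ℝ)
    (hbound : ∀ α ∈ Set.Ioc (0 : ℝ) α₀,
      ∫⁻ t in Set.Ioi (0 : ℝ), ENNReal.ofReal |u α t| ≤ ENNReal.ofReal c) :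
    Tendsto (fun α : ℝ => (1 / Real.Gamma α) * ∫ t in Set.Ioi (0 : ℝ), t ^ (α - 1) * u α t)
      (nhdsWithin 0 (Set.Ioi (0 : ℝ))) (nhds u₀) := by
  have hsec : ∀ α ∈ Ioc 0 α₀, AEStronglyMeasurable (u α) (volume.restrict (Ioi 0)) :=
    fun α hα => ((aemeasurable_restrict_iff_comap_subtype measurableSet_Ioi).2
      (hmeas.domRestrict_of_uncurry hα).aemeasurable).aestronglyMeasurable
  rw [Metric.tendsto_nhds]
  intro ε hε
  obtain ⟨δ, hδ, hu⟩ := hlim (ε / 2) (half_pos hε)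
  have hsmall : Ioo 0 (min α₀ (min 1 (δ / 2))) ∈ 𝓝[>] (0 : ℝ) :=
    Ioo_mem_nhdsGT (lt_min hα₀ (lt_min one_pos (half_pos hδ)))
  have herr := ((tendsto_rieszIntegral_error_bound (half_pos hδ) u₀ (ε / 2) (max c 0)).mono_left
    (nhdsWithin_le_nhds (s := Ioi 0))).eventually_lt_const (half_lt_self hε)
  filter_upwards [hsmall, herr] with α ⟨hα, hαm⟩ hαε
  simp only [lt_min_iff] at hαm
  have hαA : α ∈ Ioc 0 α₀ := ⟨hα, hαm.1.le⟩
  exact (abs_rieszIntegral_sub_le hα hαm.2.1.le (half_pos hδ)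
    (integrable_of_lintegral_ofReal_abs_le (hsec α hαA) (hbound α hαA))
    (integral_abs_le_of_lintegral_ofReal_abs_le (hsec α hαA) (hbound α hαA))
    fun t ht => (hu α hαA t ht.1 (by linarith [ht.2, hαm.2.2])).le).trans_lt hαε

/-- Limiting property of one-dimensional Riesz-type integrals with a
parameter-dependent density: if `u(α,t) → u₀` as `(α,t) → (0,0)` and the integrals
`∫₀^∞ |u(α,t)| dt` are uniformly bounded, then
`(1/Γ(α)) ∫₀^∞ t^{α-1} u(α,t) dt → u₀` as `α → 0⁺`. -/
theorem riesz_limit_parametric (α₀ : ℝ) (hα₀ : 0 < α₀) (hα₀' : α₀ < 1)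
    (u : ℝ → ℝ → ℝ) (u₀ : ℝ)
    (hmeas : Measurable ((Set.Ioc (0 : ℝ) α₀ ×ˢ Set.Ioi (0 : ℝ)).restrict
      (Function.uncurry u)))
    (hlim : ∀ ε > (0 : ℝ), ∃ δ > (0 : ℝ), ∀ α ∈ Set.Ioc (0 : ℝ) α₀, ∀ t > (0 : ℝ),
      α + t < δ → |u α t - u₀| < ε)
    (c : ℝ) (hc : 0 < c)
    (hbound : ∀ α ∈ Set.Ioc (0 : ℝ) α₀,
      ∫⁻ t in Set.Ioi (0 : ℝ), ENNReal.ofReal |u α t| ≤ ENNReal.ofReal c) :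
    Tendsto (fun α : ℝ => (1 / Real.Gamma α) * ∫ t in Set.Ioi (0 : ℝ), t ^ (α - 1) * u α t)
      (nhdsWithin 0 (Set.Ioi (0 : ℝ))) (nhds u₀) :=
  riesz_limit_parametric_general α₀ hα₀ u u₀ hmeas hlim c hbound
end
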